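/- Let V be the ℂ-linear span, inside the space of continuous functions from ℝ to ℂ, of the two functions x ↦ 2^x and x ↦ 2^(−x). Then V is invariant under every surjective isometry of ℝ (i.e. for every surjective isometry L : ℝ → ℝ and every g ∈ V, the function x ↦ g(L x) belongs to V), V is finite-dimensional, and yet V contains a function (namely x ↦ 2^x) that is not an ordinary polynomial. In particular, the characterization of polynomials via finite-dimensional isometry-invariant subspaces fails for d = 1. -/
import Mathlib


/-- The continuous function `x ↦ 2^x = exp(x log 2)` from `ℝ` to `ℂ`. -/
noncomputable def twoPow : C(ℝ, ℂ) :=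
  ⟨fun x => (Real.exp (x * Real.log 2) : ℂ), by fun_prop⟩

/-- The continuous function `x ↦ 2^(-x) = exp(-x log 2)` from `ℝ` to `ℂ`. -/
noncomputable def twoPowNeg : C(ℝ, ℂ) :=
  ⟨fun x => (Real.exp (-x * Real.log 2) : ℂ), by fun_prop⟩

lemma isometry_affine {L : ℝ → ℝ} (hL : ∀ x y, |L x - L y| = |x - y|) :
    (L 1 - L 0 = 1 ∨ L 1 - L 0 = -1) ∧ ∀ x, L x = L 0 + (L 1 - L 0) * x := by
  have key : ∀ a b : ℝ, (L a - L 0) * (L b - L 0) = a * b := by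
    intro a b
    have h1 : (L a - L b)^2 = (a - b)^2 := by
      rw [← sq_abs (L a - L b), hL a b, sq_abs]
    have h2 : (L a - L 0)^2 = a^2 := by
      rw [← sq_abs (L a - L 0), hL a 0, sq_abs]; ring_nf
    have h3 : (L b - L 0)^2 = b^2 := by
      rw [← sq_abs (L b - L 0), hL b 0, sq_abs]; ring_nf
    nlinarith [h1, h2, h3]
  have h1 : (L 1 - L 0) * (L 1 - L 0) = 1 := by simpa using key 1 1
  constructor
  · rcases mul_self_eq_one_iff.mp h1 with h | h
    · exact Or.inl h
    · exact Or.inr h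
  · intro x
    have hx := key x 1
    simp only [mul_one] at hx
    calc L x = L 0 + (L x - L 0) * ((L 1 - L 0) * (L 1 - L 0)) := by rw [h1]; ring
      _ = L 0 + ((L x - L 0) * (L 1 - L 0)) * (L 1 - L 0) := by ring
      _ = L 0 + (L 1 - L 0) * x := by rw [hx]; ring

/-- For `d = 1` the Loewner-type characterization fails: the span of `2^x` and `2^(-x)`
in `C(ℝ, ℂ)` is finite dimensional and invariant under all surjective isometries of
`ℝ`, yet it contains the non-polynomial function `2^x`. -/
theorem counterexample_dimension_one :
    (∀ L : ℝ → ℝ, Function.Surjective L → (∀ x y, |L x - L y| = |x - y|) →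
      ∀ g ∈ Submodule.span ℂ ({twoPow, twoPowNeg} : Set C(ℝ, ℂ)),
        ∃ g' ∈ Submodule.span ℂ ({twoPow, twoPowNeg} : Set C(ℝ, ℂ)),
          ∀ x : ℝ, g' x = g (L x)) ∧
    FiniteDimensional ℂ (Submodule.span ℂ ({twoPow, twoPowNeg} : Set C(ℝ, ℂ))) ∧
    twoPow ∈ Submodule.span ℂ ({twoPow, twoPowNeg} : Set C(ℝ, ℂ)) ∧
    ¬∃ p : Polynomial ℂ, ∀ x : ℝ, twoPow x = Polynomial.eval (x : ℂ) p := by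
  have htp : twoPow ∈ Submodule.span ℂ ({twoPow, twoPowNeg} : Set C(ℝ, ℂ)) :=
    Submodule.subset_span (by simp)
  have htn : twoPowNeg ∈ Submodule.span ℂ ({twoPow, twoPowNeg} : Set C(ℝ, ℂ)) :=
    Submodule.subset_span (by simp)
  refine ⟨?_, ?_, htp, ?_⟩
  · intro L _ hL g hg
    obtain ⟨hε, hform⟩ := isometry_affine hL
    set c := L 0 with hc
    set ε := L 1 - L 0 with hε'
    -- handle generators
    have gen1 : ∃ g' ∈ Submodule.span ℂ ({twoPow, twoPowNeg} : Set C(ℝ, ℂ)),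
        ∀ x : ℝ, g' x = twoPow (L x) := by
      rcases hε with h | h
      · refine ⟨(Real.exp (c * Real.log 2) : ℂ) • twoPow,
          Submodule.smul_mem _ _ htp, fun x => ?_⟩
        simp only [ContinuousMap.smul_apply, twoPow, ContinuousMap.coe_mk, hform x, h, smul_eq_mul]
        push_cast
        rw [← Complex.exp_add]
        ring_nf
      · refine ⟨(Real.exp (c * Real.log 2) : ℂ) • twoPowNeg,
          Submodule.smul_mem _ _ htn, fun x => ?_⟩
        simp only [ContinuousMap.smul_apply, twoPow, twoPowNeg, ContinuousMap.coe_mk, hform x, h,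
          smul_eq_mul]
        push_cast
        rw [← Complex.exp_add]
        ring_nf
    have gen2 : ∃ g' ∈ Submodule.span ℂ ({twoPow, twoPowNeg} : Set C(ℝ, ℂ)),
        ∀ x : ℝ, g' x = twoPowNeg (L x) := by
      rcases hε with h | h
      · refine ⟨(Real.exp (-c * Real.log 2) : ℂ) • twoPowNeg,
          Submodule.smul_mem _ _ htn, fun x => ?_⟩
        simp only [ContinuousMap.smul_apply, twoPowNeg, ContinuousMap.coe_mk, hform x, h,
          smul_eq_mul]
        push_cast
        rw [← Complex.exp_add]
        ring_nf
      · refine ⟨(Real.exp (-c * Real.log 2) : ℂ) • twoPow,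
          Submodule.smul_mem _ _ htp, fun x => ?_⟩
        simp only [ContinuousMap.smul_apply, twoPow, twoPowNeg, ContinuousMap.coe_mk, hform x, h,
          smul_eq_mul]
        push_cast
        rw [← Complex.exp_add]
        ring_nf
    induction hg using Submodule.span_induction with
    | mem f hf =>
      rcases hf with h | h
      · subst h; exact gen1
      · simp only [Set.mem_singleton_iff] at h; subst h; exact gen2
    | zero => exact ⟨0, Submodule.zero_mem _, by simp⟩
    | add f₁ f₂ _ _ ih₁ ih₂ =>
      obtain ⟨g₁, hg₁, he₁⟩ := ih₁
      obtain ⟨g₂, hg₂, he₂⟩ := ih₂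
      exact ⟨g₁ + g₂, Submodule.add_mem _ hg₁ hg₂, fun x => by simp [he₁ x, he₂ x]⟩
    | smul a f _ ih =>
      obtain ⟨g₁, hg₁, he₁⟩ := ih
      exact ⟨a • g₁, Submodule.smul_mem _ _ hg₁, fun x => by simp [he₁ x]⟩
  · exact FiniteDimensional.span_of_finite ℂ (Set.toFinite _)
  · rintro ⟨p, hp⟩
    have hexp : Real.exp (Real.log 2) = 2 := Real.exp_log (by norm_num)
    have h2 : ∀ x : ℝ, p.eval ((x : ℂ) + 1) = 2 * p.eval (x : ℂ) := by
      intro x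
      have ha := hp (x + 1)
      have hb := hp x
      simp only [twoPow, ContinuousMap.coe_mk] at ha hb
      have : Real.exp ((x + 1) * Real.log 2) = 2 * Real.exp (x * Real.log 2) := by
        rw [show (x + 1) * Real.log 2 = x * Real.log 2 + Real.log 2 by ring, Real.exp_add, hexp]
        ring
      rw [this] at ha
      push_cast at ha ⊢
      rw [← ha, ← hb]
      push_cast
      ring
    set q := p.comp (Polynomial.X + Polynomial.C 1) - Polynomial.C 2 * p with hq
    have hqz : q = 0 := by
      apply Polynomial.eq_zero_of_infinite_isRoot
      have hsub : Set.range ((↑) : ℝ → ℂ) ⊆ {z | q.IsRoot z} := by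
        rintro z ⟨x, rfl⟩
        simp only [Set.mem_setOf_eq, Polynomial.IsRoot, hq, Polynomial.eval_sub,
          Polynomial.eval_mul, Polynomial.eval_comp, Polynomial.eval_add, Polynomial.eval_X,
          Polynomial.eval_C]
        rw [h2 x]; ring
      exact (Set.infinite_range_of_injective Complex.ofReal_injective).mono hsub
    have hcomp : p.comp (Polynomial.X + Polynomial.C 1) = Polynomial.C 2 * p := by
      have := sub_eq_zero.mp hqz
      exact this
    have hp0 : p ≠ 0 := by
      intro h
      have := hp 0
      simp [twoPow, h] at this
    have hl0 : p.leadingCoeff = 0 := by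
      have h1 : (p.comp (Polynomial.X + Polynomial.C 1)).leadingCoeff = p.leadingCoeff := by
        rw [Polynomial.leadingCoeff_comp (by rw [Polynomial.natDegree_X_add_C]; norm_num),
          Polynomial.leadingCoeff_X_add_C, one_pow, mul_one]
      rw [hcomp, Polynomial.leadingCoeff_mul, Polynomial.leadingCoeff_C] at h1
      linear_combination h1
    exact hp0 (Polynomial.leadingCoeff_eq_zero.mp hl0)
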